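/- Let G be a trivalent, 2-edge-connected finite graph, A ⊆ V(G), and v ∈ V−A a vertex lying on a cycle of the induced subgraph G[V−A]. Then the rank of A ∪ {v} in the graph curve matroid M_G is strictly greater than the rank of A. Consequently, for any basis B of M_G, the induced subgraph G[V−B] is acyclic. -/

import Mathlib

/-- A finite undirected multigraph on vertex type `V` with edge type `E`:
each edge has an unordered pair of endpoints (possibly a loop). -/
structure Multigraph (V E : Type*) where
  ends : E → Sym2 V

namespace Multigraph

variable {V E : Type*} (G : Multigraph V E)

/-- `δ(A)`: the set of edges incident to at least one vertex of `A`. -/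
def inc (A : Set V) : Set E := {e | ∃ v ∈ A, v ∈ G.ends e}

/-- Number of connected components of the spanning subgraph of `G`
with edge set `B` (on the full vertex set `V`). -/
noncomputable def numComponentsEdges (B : Set E) : ℕ :=
  Nat.card (Quot (fun u v : V => ∃ e ∈ B, G.ends e = s(u, v)))

/-- Number of connected components `ω(S)` of the subgraph of `G` induced on `S`. -/
noncomputable def numComponentsSub (S : Set V) : ℕ :=
  Nat.card (Quot (fun x y : S => ∃ e, G.ends e = s(x.1, y.1)))

/-- Rank function of the cycle (graphic) matroid of `G`:
`r(B) = |V| - (number of components of (V, B))`. -/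
noncomputable def cycleRank (B : Set E) : ℕ :=
  Nat.card V - G.numComponentsEdges B

/-- Rank function `r*` of the bond (cographic) matroid of `G`:
`r*(B) = |B| + r(E - B) - r(E)`. -/
noncomputable def bondRank (B : Set E) : ℕ :=
  B.ncard + G.cycleRank Bᶜ - G.cycleRank Set.univ

/-- `G` is connected. -/
def Connected : Prop := G.numComponentsEdges Set.univ = 1

/-- `G` is 2-edge-connected: it is connected and deleting any single edge
leaves it connected. -/
def TwoEdgeConnected : Prop :=
  G.Connected ∧ ∀ e : E, G.numComponentsEdges {e}ᶜ = 1

/-- `G` is 2-vertex-connected: it is connected and deleting any single vertex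
leaves it connected. -/
def TwoVertexConnected : Prop :=
  G.Connected ∧ ∀ v : V, G.numComponentsSub {v}ᶜ = 1

/-- `G` has no loops. -/
def Loopless : Prop := ∀ e : E, ¬ (G.ends e).IsDiag

open Classical in
/-- The degree of a vertex, with loops counting twice. -/
noncomputable def degree [Fintype E] (v : V) : ℕ :=
  ∑ e : E, (if G.ends e = s(v, v) then 2 else if v ∈ G.ends e then 1 else 0)

/-- `G` is trivalent: every vertex has degree `3`. -/
def Trivalent [Fintype E] : Prop := ∀ v : V, G.degree v = 3

/-- `A ⊆ V` is the vertex set of a cycle `v₁, …, vₙ, v₁` of `G`: there are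
pairwise distinct vertices `f 0, …, f (n-1)` with range `A` and pairwise
distinct edges joining cyclically consecutive vertices. -/
def IsCycleSet (A : Set V) : Prop :=
  ∃ n : ℕ, 0 < n ∧ ∃ f : ZMod n → V, Function.Injective f ∧ Set.range f = A ∧
    ∃ e : ZMod n → E, Function.Injective e ∧ ∀ i, G.ends (e i) = s(f i, f (i + 1))

/-- The subgraph induced on `A` contains a cycle. -/
def Cyclic (A : Set V) : Prop := ∃ C ⊆ A, G.IsCycleSet C

/-- The subgraph induced on `A` is acyclic (a forest). -/
def Acyclic (A : Set V) : Prop := ¬ G.Cyclic A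

/-- `A` is a circuit of the graph curve matroid `M_G`: `A` is nonempty,
`r*(δ(A)) ≤ |A|`, and no proper nonempty subset `A'` satisfies `r*(δ(A')) ≤ |A'|`. -/
noncomputable def IsCircuitMG (A : Set V) : Prop :=
  A.Nonempty ∧ G.bondRank (G.inc A) ≤ A.ncard ∧
    ∀ A' : Set V, A' ⊂ A → A'.Nonempty → A'.ncard < G.bondRank (G.inc A')

/-- `A` is dependent in the graph curve matroid `M_G`, i.e. contains a circuit. -/
noncomputable def DepMG (A : Set V) : Prop := ∃ C ⊆ A, G.IsCircuitMG C

/-- `A` is independent in the graph curve matroid `M_G`. -/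
noncomputable def IndepMG (A : Set V) : Prop := ¬ G.DepMG A

/-- The rank function of the graph curve matroid `M_G`:
the maximal cardinality of an independent subset. -/
noncomputable def rankMG (A : Set V) : ℕ :=
  sSup {n | ∃ I ⊆ A, G.IndepMG I ∧ I.ncard = n}

/-- `B` is a basis of the graph curve matroid `M_G`:
a maximal independent set. -/
noncomputable def IsBasisMG (B : Set V) : Prop :=
  G.IndepMG B ∧ ∀ I : Set V, G.IndepMG I → B ⊆ I → I = B

end Multigraph

/-
Let `D` be a circuit of `M_G` containing a vertex `v` of a cycle `C` and otherwise avoiding `C`, and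
let `e₀` be an edge of `C` at `v`. The rest of `C` joins the ends of `e₀` without meeting the edge
set `S = δ(D - v)`, so `e₀` raises the bond rank: `r*(δ(D)) ≥ r*(S ∪ {e₀}) = r*(S) + 1`.
Minimality of `D` gives `r*(S) ≥ |D|`, contradicting `r*(δ(D)) ≤ |D|`. When `D = {v}` one takes
instead `S = {e}` for the third edge `e` at `v`, which lies off `C` because `v` has degree `3`, and
`r*({e}) = 1` by 2-edge-connectivity.
Hence adding `v` to an independent set avoiding `C` keeps it independent; this raises the rank and
forbids cycles outside a basis.
-/

namespace Multigraph

open Relation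

variable {V E : Type*} {G : Multigraph V E}

variable (G) in
def Adj (B : Set E) (u w : V) : Prop := ∃ e ∈ B, G.ends e = s(u, w)

lemma numComponentsEdges_def (B : Set E) :
    G.numComponentsEdges B = Nat.card (Quot (G.Adj B)) := rfl

lemma Adj.mono {B B' : Set E} (h : B ⊆ B') {u w : V} : G.Adj B u w → G.Adj B' u w :=
  fun ⟨e, he, hends⟩ => ⟨e, h he, hends⟩

lemma eqvGen_adj_insert {B : Set E} {e : E} {u w : V} (he : G.ends e = s(u, w)) {a b : V}
    (h : EqvGen (G.Adj (insert e B)) a b) :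
    EqvGen (G.Adj B) a b ∨
      ((EqvGen (G.Adj B) a u ∨ EqvGen (G.Adj B) a w) ∧
        (EqvGen (G.Adj B) b u ∨ EqvGen (G.Adj B) b w)) := by
  have hR := EqvGen.is_equivalence (G.Adj B)
  have near_of {x y : V} (hxy : EqvGen (G.Adj B) x y) :
      EqvGen (G.Adj B) y u ∨ EqvGen (G.Adj B) y w →
        EqvGen (G.Adj B) x u ∨ EqvGen (G.Adj B) x w :=
    Or.imp (hR.trans hxy) (hR.trans hxy)
  induction h with
  | rel x y hxy =>
    obtain ⟨f, rfl | hf, hends⟩ := hxy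
    · rw [he, Sym2.eq_iff] at hends
      rcases hends with ⟨rfl, rfl⟩ | ⟨rfl, rfl⟩
      · exact .inr ⟨.inl (hR.refl _), .inr (hR.refl _)⟩
      · exact .inr ⟨.inr (hR.refl _), .inl (hR.refl _)⟩
    · exact .inl (.rel _ _ ⟨f, hf, hends⟩)
  | refl x => exact .inl (hR.refl x)
  | symm x y _ ih => exact ih.imp hR.symm And.symm
  | trans x y z _ _ ih₁ ih₂ =>
    rcases ih₁ with hxy | ⟨hx, hy⟩ <;> rcases ih₂ with hyz | ⟨hy', hz⟩
    · exact .inl (hR.trans hxy hyz)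
    · exact .inr ⟨near_of hxy hy', hz⟩
    · exact .inr ⟨hx, near_of (hR.symm hyz) hy⟩
    · exact .inr ⟨hx, hz⟩

lemma eqvGen_adj_of_path {ι : Type*} [AddMonoidWithOne ι] {f : ι → V} {ed : ι → E}
    (hends : ∀ i, G.ends (ed i) = s(f i, f (i + 1))) {B : Set E} (a : ι) (m : ℕ)
    (hB : ∀ k < m, ed (a + k) ∈ B) : EqvGen (G.Adj B) (f a) (f (a + m)) := by
  induction m with
  | zero => simpa using EqvGen.refl _
  | succ m ih =>
    have hstep : G.Adj B (f (a + m)) (f (a + (m + 1 : ℕ))) :=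
      ⟨ed (a + m), hB m (by omega), by rw [hends, Nat.cast_succ, add_assoc]⟩
    exact .trans _ _ _ (ih fun k hk => hB k (by omega)) (.rel _ _ hstep)

lemma eqvGen_adj_of_cycle {m : ℕ} {f : ZMod (m + 1) → V} {ed : ZMod (m + 1) → E}
    (hends : ∀ i, G.ends (ed i) = s(f i, f (i + 1))) {B : Set E} (i₀ : ZMod (m + 1))
    (hB : ∀ i ≠ i₀, ed i ∈ B) : EqvGen (G.Adj B) (f (i₀ + 1)) (f i₀) := by
  have hwrap : i₀ + 1 + (m : ZMod (m + 1)) = i₀ := by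
    have := ZMod.natCast_self (m + 1)
    push_cast at this
    linear_combination this
  have hoff : ∀ k < m, i₀ + 1 + (k : ZMod (m + 1)) ≠ i₀ := by
    intro k hk hk'
    have : ((k + 1 : ℕ) : ZMod (m + 1)) = 0 := by push_cast; linear_combination hk'
    rw [ZMod.natCast_eq_zero_iff] at this
    exact absurd (Nat.le_of_dvd (by omega) this) (by omega)
  have hpath := eqvGen_adj_of_path hends (i₀ + 1) m fun k hk => hB _ (hoff k hk)
  rwa [hwrap] at hpath

lemma IsCycleSet.nonempty {C : Set V} (hC : G.IsCycleSet C) : C.Nonempty := by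
  obtain ⟨n, hn, f, -, rfl, -⟩ := hC
  have : NeZero n := ⟨hn.ne'⟩
  exact Set.range_nonempty f

lemma exists_mem_ends_notMem_range_of_cycle [Fintype E] {m : ℕ} {f : ZMod (m + 1) → V}
    (hf : Function.Injective f) {ed : ZMod (m + 1) → E} (hed : Function.Injective ed)
    (hends : ∀ i, G.ends (ed i) = s(f i, f (i + 1))) (i₀ : ZMod (m + 1))
    (hdeg : G.degree (f i₀) = 3) : ∃ e, f i₀ ∈ G.ends e ∧ e ∉ Set.range ed := by
  classical
  by_contra! h
  -- the cycle alone contributes `1 + 1 = 2` to the degree of `f i₀`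
  have hsum : G.degree (f i₀) =
      ∑ i, ((if f i = f i₀ then 1 else 0) + if f (i + 1) = f i₀ then 1 else 0) := by
    refine (Fintype.sum_of_injective ed hed _ _ (fun e he => ?_) fun i => ?_).symm
    · have hv : f i₀ ∉ G.ends e := fun hv => he (h e hv)
      rw [if_neg fun (hl : G.ends e = s(f i₀, f i₀)) => hv (hl ▸ Sym2.mem_mk_left _ _), if_neg hv]
    · rw [hends]
      generalize f i = a, f (i + 1) = b, f i₀ = v
      by_cases ha : a = v <;> by_cases hb : b = v <;> subst_vars <;> simp [Ne.symm, *]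
  simp [Finset.sum_add_distrib, hf.eq_iff, ← eq_sub_iff_add_eq, hdeg] at hsum

section Components

variable [Finite V]

lemma numComponentsEdges_le_of_subset {B B' : Set E} (h : B ⊆ B') :
    G.numComponentsEdges B' ≤ G.numComponentsEdges B :=
  Nat.card_le_card_of_surjective (Quot.map id fun _ _ => Adj.mono h)
    (by rintro ⟨a⟩; exact ⟨Quot.mk _ a, rfl⟩)

lemma numComponentsEdges_le_card (B : Set E) : G.numComponentsEdges B ≤ Nat.card V :=
  Nat.card_le_card_of_surjective _ Quot.mk_surjective

lemma numComponentsEdges_le_insert_add_one (B : Set E) (e : E) :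
    G.numComponentsEdges B ≤ G.numComponentsEdges (insert e B) + 1 := by
  classical
  have hR := EqvGen.is_equivalence (G.Adj B)
  obtain ⟨⟨u, w⟩, he⟩ := Quot.exists_rep (G.ends e)
  let φ : Quot (G.Adj B) → Quot (G.Adj (insert e B)) :=
    Quot.map id fun _ _ => Adj.mono (Set.subset_insert e B)
  -- only the class of `u` can merge with another one (that of `w`)
  have hinj : Function.Injective fun x => if x = Quot.mk _ u then none else some (φ x) := by
    rintro ⟨a⟩ ⟨b⟩ hab
    by_cases ha : Quot.mk (G.Adj B) a = Quot.mk _ u <;>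
      by_cases hb : Quot.mk (G.Adj B) b = Quot.mk _ u <;>
      simp only [ha, hb, if_true, if_false, reduceCtorEq, Option.some_inj] at hab
    · exact ha.trans hb.symm
    rcases eqvGen_adj_insert he.symm (Quot.eq.mp hab) with hab | ⟨hau | haw, hbu | hbw⟩
    · exact Quot.eq.mpr hab
    · exact absurd (Quot.eq.mpr hau) ha
    · exact absurd (Quot.eq.mpr hau) ha
    · exact absurd (Quot.eq.mpr hbu) hb
    · exact Quot.eq.mpr (hR.trans haw (hR.symm hbw))
  simpa only [numComponentsEdges_def, Finite.card_option] using
    Nat.card_le_card_of_injective _ hinj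

lemma numComponentsEdges_insert_of_eqvGen {B : Set E} {e : E} {u w : V}
    (he : G.ends e = s(u, w)) (huw : EqvGen (G.Adj B) u w) :
    G.numComponentsEdges (insert e B) = G.numComponentsEdges B := by
  have hR := EqvGen.is_equivalence (G.Adj B)
  refine le_antisymm (numComponentsEdges_le_of_subset (Set.subset_insert e B)) ?_
  refine Nat.card_le_card_of_injective
    (Quot.map id fun _ _ => Adj.mono (Set.subset_insert e B)) ?_
  rintro ⟨a⟩ ⟨b⟩ hab
  rcases eqvGen_adj_insert he (Quot.eq.mp hab) with hab | ⟨hau | haw, hbu | hbw⟩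
  · exact Quot.eq.mpr hab
  all_goals apply Quot.eq.mpr
  · exact hR.trans hau (hR.symm hbu)
  · exact hR.trans hau (hR.trans huw (hR.symm hbw))
  · exact hR.trans haw (hR.trans (hR.symm huw) (hR.symm hbu))
  · exact hR.trans haw (hR.symm hbw)

lemma numComponentsEdges_le_union_add_ncard (B : Set E) {F : Set E} (hF : F.Finite) :
    G.numComponentsEdges B ≤ G.numComponentsEdges (B ∪ F) + F.ncard := by
  induction F, hF using Set.Finite.induction_on with
  | empty => simp
  | @insert e F heF hF ih =>
    have := numComponentsEdges_le_insert_add_one (G := G) (B ∪ F) e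
    rw [Set.union_insert, Set.ncard_insert_of_notMem heF hF]
    omega

end Components

section BondRank

variable [Finite V] [Finite E]

lemma bondRank_add_numComponentsEdges_compl (hG : G.Connected) (B : Set E) :
    G.bondRank B + G.numComponentsEdges Bᶜ = B.ncard + 1 := by
  have hB := numComponentsEdges_le_union_add_ncard (G := G) Bᶜ B.toFinite
  have hV := numComponentsEdges_le_card (G := G) Set.univ
  have hBV := numComponentsEdges_le_card (G := G) Bᶜ
  rw [Set.compl_union_self, hG] at hB
  rw [Connected] at hG
  unfold bondRank cycleRank
  omega

lemma bondRank_mono (hG : G.Connected) {S T : Set E} (h : S ⊆ T) :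
    G.bondRank S ≤ G.bondRank T := by
  have hS := bondRank_add_numComponentsEdges_compl hG S
  have hT := bondRank_add_numComponentsEdges_compl hG T
  have hcomp := numComponentsEdges_le_union_add_ncard (G := G) Tᶜ (T \ S).toFinite
  have hdiff := Set.ncard_sdiff_add_ncard_of_subset h T.toFinite
  have hTS : Tᶜ ∪ T \ S = Sᶜ := by
    ext
    simp only [Set.mem_union, Set.mem_compl_iff, Set.mem_sdiff]
    tauto
  rw [hTS] at hcomp
  omega

lemma bondRank_insert_of_eqvGen (hG : G.Connected) {S : Set E} {e : E} {u w : V} (heS : e ∉ S)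
    (he : G.ends e = s(u, w)) (huw : EqvGen (G.Adj (insert e S)ᶜ) u w) :
    G.bondRank (insert e S) = G.bondRank S + 1 := by
  have hS := bondRank_add_numComponentsEdges_compl hG S
  have hT := bondRank_add_numComponentsEdges_compl hG (insert e S)
  have hcomp := numComponentsEdges_insert_of_eqvGen he huw
  rw [show insert e (insert e S)ᶜ = Sᶜ by ext x; by_cases x = e <;> simp_all] at hcomp
  rw [Set.ncard_insert_of_notMem heS] at hT
  omega

lemma bondRank_insert_of_cycle (hG : G.Connected) {m : ℕ}
    {f : ZMod (m + 1) → V} {ed : ZMod (m + 1) → E} (hed : Function.Injective ed)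
    (hends : ∀ i, G.ends (ed i) = s(f i, f (i + 1))) {S : Set E} (hS : ∀ i, ed i ∉ S)
    (i₀ : ZMod (m + 1)) : G.bondRank (insert (ed i₀) S) = G.bondRank S + 1 :=
  bondRank_insert_of_eqvGen hG (hS i₀) (hends i₀) <| .symm _ _ <|
    eqvGen_adj_of_cycle hends i₀ fun i hi => by simp [hed.ne hi, hS i]

lemma TwoEdgeConnected.bondRank_singleton (hG : G.TwoEdgeConnected) (e : E) :
    G.bondRank {e} = 1 := by
  have := bondRank_add_numComponentsEdges_compl hG.1 {e}
  rw [hG.2 e, Set.ncard_singleton] at this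
  omega

end BondRank

section GraphCurveMatroid

lemma not_isCircuitMG_of_mem_cycle [Finite V] [Fintype E] (h3 : G.Trivalent)
    (h2 : G.TwoEdgeConnected) {C D : Set V} {v : V} (hC : G.IsCycleSet C) (hvC : v ∈ C)
    (hvD : v ∈ D) (hDC : D ∩ C ⊆ {v}) : ¬ G.IsCircuitMG D := by
  rintro ⟨-, hD, hmin⟩
  obtain ⟨n, hn, f, hf, rfl, ed, hed, hends⟩ := hC
  obtain ⟨m, rfl⟩ := Nat.exists_eq_add_one_of_ne_zero hn.ne'
  obtain ⟨i₀, rfl⟩ := hvC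
  obtain ⟨S, hSD, hSC, hS⟩ : ∃ S ⊆ G.inc D, (∀ i, ed i ∉ S) ∧ D.ncard ≤ G.bondRank S := by
    by_cases hD' : (D \ {f i₀}).Nonempty
    · refine ⟨G.inc (D \ {f i₀}), fun e ⟨x, hx, hxe⟩ => ⟨x, hx.1, hxe⟩, ?_, ?_⟩
      · rintro i ⟨x, ⟨hxD, hxv⟩, hx⟩
        rw [hends, Sym2.mem_iff] at hx
        exact hxv (hDC ⟨hxD, by rcases hx with rfl | rfl <;> exact Set.mem_range_self _⟩)
      · have := hmin _ (Set.sdiff_singleton_ssubset.2 hvD) hD'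
        have := Set.ncard_sdiff_singleton_add_one hvD
        omega
    · have hDv : D = {f i₀} := by
        rw [Set.not_nonempty_iff_eq_empty, Set.sdiff_eq_empty] at hD'
        exact hD'.antisymm (Set.singleton_subset_iff.2 hvD)
      obtain ⟨e, hve, he⟩ := exists_mem_ends_notMem_range_of_cycle hf hed hends i₀ (h3 _)
      refine ⟨{e}, by simpa [hDv, inc] using hve, fun i hi => he ⟨i, hi⟩, ?_⟩
      rw [hDv, Set.ncard_singleton, h2.bondRank_singleton]
  have he₀ : ed i₀ ∈ G.inc D := ⟨f i₀, hvD, by simp [hends]⟩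
  have hmono := bondRank_mono h2.1 (Set.insert_subset he₀ hSD)
  rw [bondRank_insert_of_cycle h2.1 hed hends hSC] at hmono
  omega

lemma IndepMG.insert_of_mem_cycle [Finite V] [Fintype E] (h3 : G.Trivalent)
    (h2 : G.TwoEdgeConnected) {I C : Set V} {v : V} (hI : G.IndepMG I) (hC : G.IsCycleSet C)
    (hCI : C ⊆ Iᶜ) (hvC : v ∈ C) : G.IndepMG (insert v I) := by
  rintro ⟨D, hDI, hD⟩
  by_cases hvD : v ∈ D
  · exact not_isCircuitMG_of_mem_cycle h3 h2 hC hvC hvD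
      (fun x ⟨hxD, hxC⟩ => (hDI hxD).resolve_right (hCI hxC)) hD
  · exact hI ⟨D, fun x hx => (hDI hx).resolve_left (ne_of_mem_of_not_mem hx hvD), hD⟩

lemma indepMG_empty : G.IndepMG ∅ := by
  rintro ⟨_, hC, hne, -⟩
  exact hne.ne_empty (Set.subset_empty_iff.1 hC)

variable [Finite V]

lemma bddAbove_rankMG_set (A : Set V) :
    BddAbove {n | ∃ I ⊆ A, G.IndepMG I ∧ I.ncard = n} :=
  ⟨Nat.card V, fun _ ⟨I, _, _, hI⟩ => hI ▸ Set.ncard_le_card I⟩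

lemma exists_indepMG_ncard_eq_rankMG (A : Set V) :
    ∃ I ⊆ A, G.IndepMG I ∧ I.ncard = G.rankMG A :=
  Nat.sSup_mem (s := {n | ∃ I ⊆ A, G.IndepMG I ∧ I.ncard = n})
    ⟨0, ∅, Set.empty_subset A, indepMG_empty, Set.ncard_empty V⟩ (bddAbove_rankMG_set A)

lemma IndepMG.ncard_le_rankMG {I A : Set V} (hI : G.IndepMG I) (hIA : I ⊆ A) :
    I.ncard ≤ G.rankMG A :=
  le_csSup (bddAbove_rankMG_set A) ⟨I, hIA, hI, rfl⟩

end GraphCurveMatroid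

end Multigraph

/-- Let `G` be trivalent and 2-edge-connected, `A ⊆ V`, and
`v ∈ V - A` a vertex lying on a cycle of `G[V-A]`. Then
`r_{M_G}(A ∪ {v}) > r_{M_G}(A)`. Consequently, the complement of any basis of
`M_G` induces an acyclic subgraph. -/
theorem rankMG_insert_of_mem_cycle {V E : Type*} [Fintype V] [Fintype E]
    (G : Multigraph V E) (h3 : G.Trivalent) (h2 : G.TwoEdgeConnected) :
    (∀ (A : Set V) (v : V), v ∉ A →
      (∃ C ⊆ Aᶜ, G.IsCycleSet C ∧ v ∈ C) →
      G.rankMG A < G.rankMG (A ∪ {v})) ∧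
    (∀ B : Set V, G.IsBasisMG B → G.Acyclic Bᶜ) := by
  refine ⟨fun A v hvA ⟨C, hCA, hC, hvC⟩ => ?_, fun B hB ⟨C, hCB, hC⟩ => ?_⟩
  · obtain ⟨I, hIA, hI, hIr⟩ := G.exists_indepMG_ncard_eq_rankMG A
    have hvI : v ∉ I := fun h => hvA (hIA h)
    have hJ := hI.insert_of_mem_cycle h3 h2 hC (hCA.trans (Set.compl_subset_compl.2 hIA)) hvC
    calc G.rankMG A < (insert v I).ncard := by rw [Set.ncard_insert_of_notMem hvI, hIr]; omega
      _ ≤ G.rankMG (A ∪ {v}) :=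
        hJ.ncard_le_rankMG (by rw [Set.union_singleton]; exact Set.insert_subset_insert hIA)
  · obtain ⟨v, hvC⟩ := hC.nonempty
    have hBv := hB.2 _ (hB.1.insert_of_mem_cycle h3 h2 hC hCB hvC) (Set.subset_insert v B)
    exact hCB hvC (hBv ▸ Set.mem_insert v B)
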